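/- Let S be a standard symbol with exactly p pairs. For every subset T of the set of pairs of S, exchanging the two members of each pair in T between the two rows of S and reordering each row increasingly yields again a symbol in Sy(n,k,r) (both rows strictly increasing, of lengths k+r and k), and distinct subsets T yield distinct symbols. Consequently the set C(S) of symbols so obtained has cardinality exactly 2^p. -/
import Mathlib


namespace LM2003

open scoped BigOperators

/-- `(β, γ)` is a symbol in `Sy(n,k,r)`: two finite sets of integers contained in
`{1, …, n+1}`, of cardinalities `k+r` and `k` (rows are identified with the subsets
they enumerate; strict increase is automatic). -/
def IsSymbol (n k r : ℕ) (β γ : Finset ℤ) : Prop :=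
  β ⊆ Finset.Icc 1 ((n : ℤ) + 1) ∧ γ ⊆ Finset.Icc 1 ((n : ℤ) + 1) ∧
    β.card = k + r ∧ γ.card = k

/-- `(β,γ)` is standard: for each `i < |γ|`, the `i`-th smallest element of `β`
is `≤` the `i`-th smallest element of `γ`. -/
def IsStandard (β γ : Finset ℤ) : Prop :=
  ∀ i : ℕ, i < γ.card → (β.sort (· ≤ ·))[i]! ≤ (γ.sort (· ≤ ·))[i]!

/-- Accumulated data after level `l` of the recursive definition of `ψ`:
the first component is `γ⁰ ∪ ⋯ ∪ γ^l` and the second is `ψ(γ⁰ ∪ ⋯ ∪ γ^l)`. -/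
def psiAcc (β γ : Finset ℤ) : ℕ → Finset ℤ × Finset ℤ
  | 0 => (γ ∩ β, γ ∩ β)
  | l + 1 =>
    let p := psiAcc β γ l
    let g := (γ \ p.1).filter fun j => j - ((l : ℤ) + 1) ∈ β \ p.2
    (p.1 ∪ g, p.2 ∪ g.image fun j => j - ((l : ℤ) + 1))

/-- The level sets `γ^l` in the recursive definition of `ψ`. -/
def gammaL (β γ : Finset ℤ) : ℕ → Finset ℤ
  | 0 => γ ∩ β
  | l + 1 =>
    (γ \ (psiAcc β γ l).1).filter fun j => j - ((l : ℤ) + 1) ∈ β \ (psiAcc β γ l).2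

open Classical in
/-- The map `ψ` : for `j ∈ γ^l` it is `j ↦ j - l` (via the least such `l`),
and the identity elsewhere. -/
noncomputable def psiS (β γ : Finset ℤ) (j : ℤ) : ℤ :=
  if h : ∃ l, j ∈ gammaL β γ l then j - (Nat.find h : ℤ) else j

/-- The pairs of a (standard) symbol: the pairs `(j, ψ(j))` with `j ∈ γ` and `ψ(j) ≠ j`. -/
noncomputable def pairsS (β γ : Finset ℤ) : Finset (ℤ × ℤ) :=
  (γ.filter fun j => psiS β γ j ≠ j).image fun j => (j, psiS β γ j)

/-- Exchanging, for every pair in `T`, the two members between the two rows of `(β,γ)`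
(reordering of rows is automatic for sets). Pairs are written `(j, ψ j)` with `j` in the
bottom row `γ` and `ψ j` in the top row `β`. -/
def swapSymbol (β γ : Finset ℤ) (T : Finset (ℤ × ℤ)) : Finset ℤ × Finset ℤ :=
  ((β \ T.image Prod.snd) ∪ T.image Prod.fst,
   (γ \ T.image Prod.fst) ∪ T.image Prod.snd)

/-- The class `C(S)` of a standard symbol: all symbols obtained by permuting a subset
of its pairs. -/
noncomputable def CSet (β γ : Finset ℤ) : Finset (Finset ℤ × Finset ℤ) :=
  (pairsS β γ).powerset.image (swapSymbol β γ)

/-- The Fock space `F(Λ)`: free `ℚ(v)`-module on the set of all symbols. -/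
abbrev FF : Type := (Finset ℤ × Finset ℤ) →₀ RatFunc ℚ

/-- Standard basis vector `u_S`. -/
noncomputable def uS (S : Finset ℤ × Finset ℤ) : FF := Finsupp.single S 1

/-- The variable `v` of `K = ℚ(v)`. -/
noncomputable def vv : RatFunc ℚ := RatFunc.X

/-- Action of the Chevalley generator `f_j` on the standard basis vector `u_S`. -/
noncomputable def fAct (j : ℤ) (S : Finset ℤ × Finset ℤ) : FF :=
  (if j ∈ S.2 ∧ j + 1 ∉ S.2 then uS (S.1, insert (j + 1) (S.2.erase j)) else 0) +
  (if j ∈ S.1 ∧ j + 1 ∉ S.1 then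
      vv ^ ((if j ∈ S.2 then (1 : ℤ) else 0) - (if j + 1 ∈ S.2 then (1 : ℤ) else 0)) •
        uS (insert (j + 1) (S.1.erase j), S.2)
    else 0)

/-- The Chevalley generator `f_j` as a linear operator on `F`. -/
noncomputable def fLin (j : ℤ) : FF →ₗ[RatFunc ℚ] FF :=
  Finsupp.lsum (RatFunc ℚ) fun S => LinearMap.toSpanSingleton (RatFunc ℚ) FF (fAct j S)

/-- Divided powers: `f_j^{(1)} = f_j`, `f_j^{(2)} = f_j² / (v + v⁻¹)`. -/
noncomputable def fDiv (j : ℤ) (m : ℕ) : FF →ₗ[RatFunc ℚ] FF :=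
  if m = 2 then (vv + vv⁻¹)⁻¹ • (fLin j ∘ₗ fLin j) else fLin j

/-- `b_S = Σ_{Σ ∈ C(S)} v^{n(Σ)} u_Σ`, written as a sum over the subsets `T` of the
set of pairs of `S` (with `n(Σ) = |T|`). -/
noncomputable def bS (β γ : Finset ℤ) : FF :=
  ∑ T ∈ (pairsS β γ).powerset, vv ^ T.card • uS (swapSymbol β γ T)

/-- `ι` is an involution of the finite set `Z`. -/
def IsInvolutionOn (Z : Finset ℤ) (ι : ℤ → ℤ) : Prop :=
  (∀ z ∈ Z, ι z ∈ Z) ∧ ∀ z ∈ Z, ι (ι z) = z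

/-- `z < z'` are consecutive elements of `Z`. -/
def ConsecutiveIn (Z : Finset ℤ) (z z' : ℤ) : Prop :=
  z ∈ Z ∧ z' ∈ Z ∧ z < z' ∧ ∀ x ∈ Z, ¬(z < x ∧ x < z')

/-- `r`-admissible involutions of a finite set `Z` of integers: `ι` is an involution of
`Z` with exactly `r` fixed points, and either `|Z| = r`, or there are two consecutive
elements `z < z'` of `Z` with `ι z = z'` whose removal again yields an `r`-admissible
involution. -/
inductive IsAdmissible (r : ℕ) : Finset ℤ → (ℤ → ℤ) → Prop
  | base (Z : Finset ℤ) (ι : ℤ → ℤ) (hinv : IsInvolutionOn Z ι)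
      (hfix : (Z.filter fun z => ι z = z).card = r) (hcard : Z.card = r) :
      IsAdmissible r Z ι
  | step (Z : Finset ℤ) (ι : ℤ → ℤ) (z z' : ℤ) (hinv : IsInvolutionOn Z ι)
      (hfix : (Z.filter fun w => ι w = w).card = r)
      (hcons : ConsecutiveIn Z z z') (hzz : ι z = z')
      (hrec : IsAdmissible r (Z \ {z, z'}) ι) :
      IsAdmissible r Z ι

/-- `c_j(S)`: number of occurrences of `j` among the entries of the symbol `(β,γ)`. -/
def contentS (β γ : Finset ℤ) (j : ℤ) : ℕ :=
  (if j ∈ β then 1 else 0) + (if j ∈ γ then 1 else 0)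

section Aux

variable (β γ : Finset ℤ)

lemma psiAcc_fst_subset : ∀ l, (psiAcc β γ l).1 ⊆ γ
  | 0 => Finset.inter_subset_left
  | l + 1 => by
    simp only [psiAcc]
    exact Finset.union_subset (psiAcc_fst_subset l)
      ((Finset.filter_subset _ _).trans Finset.sdiff_subset)

lemma psiAcc_snd_subset : ∀ l, (psiAcc β γ l).2 ⊆ β
  | 0 => Finset.inter_subset_right
  | l + 1 => by
    simp only [psiAcc]
    refine Finset.union_subset (psiAcc_snd_subset l) ?_
    intro x hx
    simp only [Finset.mem_image] at hx
    obtain ⟨j, hj, rfl⟩ := hx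
    exact (Finset.mem_sdiff.mp (Finset.mem_filter.mp hj).2).1

lemma psiAcc_fst_mono : ∀ {l l' : ℕ}, l ≤ l' → (psiAcc β γ l).1 ⊆ (psiAcc β γ l').1 := by
  intro l l' h
  induction l' with
  | zero => simpa [Nat.le_zero.mp h] using Finset.Subset.refl _
  | succ m ih =>
    rcases Nat.lt_succ_iff_lt_or_eq.mp (Nat.lt_succ_of_le h) with h' | h'
    · refine (ih (Nat.lt_succ_iff.mp h')).trans ?_
      simp only [psiAcc]
      exact Finset.subset_union_left
    · subst h'; exact Finset.Subset.refl _

lemma psiAcc_snd_mono : ∀ {l l' : ℕ}, l ≤ l' → (psiAcc β γ l).2 ⊆ (psiAcc β γ l').2 := by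
  intro l l' h
  induction l' with
  | zero => simpa [Nat.le_zero.mp h] using Finset.Subset.refl _
  | succ m ih =>
    rcases Nat.lt_succ_iff_lt_or_eq.mp (Nat.lt_succ_of_le h) with h' | h'
    · refine (ih (Nat.lt_succ_iff.mp h')).trans ?_
      simp only [psiAcc]
      exact Finset.subset_union_left
    · subst h'; exact Finset.Subset.refl _

lemma inter_subset_psiAcc_fst (l : ℕ) : γ ∩ β ⊆ (psiAcc β γ l).1 :=
  psiAcc_fst_mono β γ (Nat.zero_le l)

lemma inter_subset_psiAcc_snd (l : ℕ) : γ ∩ β ⊆ (psiAcc β γ l).2 :=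
  psiAcc_snd_mono β γ (Nat.zero_le l)

lemma gammaL_subset_psiAcc_fst : ∀ l, gammaL β γ l ⊆ (psiAcc β γ l).1
  | 0 => Finset.Subset.refl _
  | l + 1 => by
    intro x hx
    simp only [psiAcc]
    exact Finset.mem_union_right _ hx

lemma mem_gammaL_succ {j : ℤ} {l : ℕ} (h : j ∈ gammaL β γ (l + 1)) :
    j ∈ γ ∧ j ∉ (psiAcc β γ l).1 ∧ j - ((l : ℤ) + 1) ∈ β ∧
      j - ((l : ℤ) + 1) ∉ (psiAcc β γ l).2 := by
  simp only [gammaL, Finset.mem_filter, Finset.mem_sdiff] at h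
  exact ⟨h.1.1, h.1.2, h.2.1, h.2.2⟩

lemma gammaL_level_unique {j : ℤ} {l l' : ℕ} (h : j ∈ gammaL β γ l)
    (h' : j ∈ gammaL β γ l') : l = l' := by
  by_contra hne
  wlog hlt : l < l' generalizing l l'
  · exact this h' h (Ne.symm hne) (by omega)
  obtain ⟨m, rfl⟩ : ∃ m, l' = m + 1 := ⟨l' - 1, by omega⟩
  exact (mem_gammaL_succ β γ h').2.1
    (psiAcc_fst_mono β γ (by omega : l ≤ m) (gammaL_subset_psiAcc_fst β γ l h))

lemma psiS_eq_of_mem_gammaL {j : ℤ} {l : ℕ} (h : j ∈ gammaL β γ l) :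
    psiS β γ j = j - (l : ℤ) := by
  classical
  have hex : ∃ l, j ∈ gammaL β γ l := ⟨l, h⟩
  rw [psiS, dif_pos hex]
  congr 2
  exact gammaL_level_unique β γ (Nat.find_spec hex) h

/-- Structure of an element of `pairsS`. -/
lemma pairsS_struct {p : ℤ × ℤ} (hp : p ∈ pairsS β γ) :
    ∃ l : ℕ, p.1 ∈ gammaL β γ (l + 1) ∧ p.2 = p.1 - ((l : ℤ) + 1) ∧
      p.2 = psiS β γ p.1 := by
  classical
  simp only [pairsS, Finset.mem_image, Finset.mem_filter] at hp
  obtain ⟨j, ⟨hjγ, hne⟩, rfl⟩ := hp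
  by_cases hex : ∃ l, j ∈ gammaL β γ l
  · obtain ⟨l, hl⟩ := hex
    have hpsi := psiS_eq_of_mem_gammaL β γ hl
    rcases l with _ | m
    · exact absurd (by simpa using hpsi) hne
    · exact ⟨m, hl, by push_cast at hpsi ⊢; omega, rfl⟩
  · rw [psiS, dif_neg hex] at hne
    exact absurd rfl hne

lemma pair_fst_mem_gamma {p : ℤ × ℤ} (hp : p ∈ pairsS β γ) : p.1 ∈ γ := by
  obtain ⟨l, hl, -, -⟩ := pairsS_struct β γ hp
  exact (mem_gammaL_succ β γ hl).1

lemma pair_fst_not_mem_beta {p : ℤ × ℤ} (hp : p ∈ pairsS β γ) : p.1 ∉ β := by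
  obtain ⟨l, hl, -, -⟩ := pairsS_struct β γ hp
  intro hβ
  exact (mem_gammaL_succ β γ hl).2.1
    (inter_subset_psiAcc_fst β γ l (Finset.mem_inter.mpr ⟨(mem_gammaL_succ β γ hl).1, hβ⟩))

lemma pair_snd_mem_beta {p : ℤ × ℤ} (hp : p ∈ pairsS β γ) : p.2 ∈ β := by
  obtain ⟨l, hl, he, -⟩ := pairsS_struct β γ hp
  rw [he]
  exact (mem_gammaL_succ β γ hl).2.2.1

lemma pair_snd_not_mem_gamma {p : ℤ × ℤ} (hp : p ∈ pairsS β γ) : p.2 ∉ γ := by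
  obtain ⟨l, hl, he, -⟩ := pairsS_struct β γ hp
  intro hγ
  have hβ : p.2 ∈ β := he ▸ (mem_gammaL_succ β γ hl).2.2.1
  have hmem : p.2 ∈ (psiAcc β γ l).2 :=
    inter_subset_psiAcc_snd β γ l (Finset.mem_inter.mpr ⟨hγ, hβ⟩)
  rw [he] at hmem
  exact (mem_gammaL_succ β γ hl).2.2.2 hmem

lemma pair_snd_mem_psiAcc {p : ℤ × ℤ} {l : ℕ} (hl : p.1 ∈ gammaL β γ (l + 1))
    (he : p.2 = p.1 - ((l : ℤ) + 1)) : p.2 ∈ (psiAcc β γ (l + 1)).2 := by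
  show p.2 ∈ (psiAcc β γ (l + 1)).2
  simp only [psiAcc]
  refine Finset.mem_union_right _ ?_
  exact Finset.mem_image.mpr ⟨p.1, hl, he.symm⟩

lemma pair_fst_inj {p q : ℤ × ℤ} (hp : p ∈ pairsS β γ) (hq : q ∈ pairsS β γ)
    (h : p.1 = q.1) : p = q := by
  obtain ⟨l, -, -, he⟩ := pairsS_struct β γ hp
  obtain ⟨l', -, -, he'⟩ := pairsS_struct β γ hq
  have : p.2 = q.2 := by rw [he, he', h]
  exact Prod.ext h this

lemma pair_snd_inj {p q : ℤ × ℤ} (hp : p ∈ pairsS β γ) (hq : q ∈ pairsS β γ)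
    (h : p.2 = q.2) : p = q := by
  obtain ⟨l, hl, he, -⟩ := pairsS_struct β γ hp
  obtain ⟨l', hl', he', -⟩ := pairsS_struct β γ hq
  rcases lt_trichotomy l l' with hlt | heq | hlt
  · exfalso
    refine (mem_gammaL_succ β γ hl').2.2.2 ?_
    rw [← he', ← h, he]
    have := pair_snd_mem_psiAcc β γ hl he
    rw [he] at this
    exact psiAcc_snd_mono β γ (by omega : l + 1 ≤ l') this
  · subst heq
    refine pair_fst_inj β γ hp hq ?_
    have : p.1 - ((l : ℤ) + 1) = q.1 - ((l : ℤ) + 1) := by rw [← he, ← he', h]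
    omega
  · exfalso
    refine (mem_gammaL_succ β γ hl).2.2.2 ?_
    rw [← he, h, he']
    have := pair_snd_mem_psiAcc β γ hl' he'
    rw [he'] at this
    exact psiAcc_snd_mono β γ (by omega : l' + 1 ≤ l) this

end Aux

/-- exchanging any subset `T` of the pairs of a standard symbol `S` again
yields a symbol in `Sy(n,k,r)`, distinct subsets yield distinct symbols, and hence
`|C(S)| = 2^p` where `p` is the number of pairs of `S`. -/
theorem statement1 (n k r : ℕ) (hn : 2 ≤ n) (hk : 1 ≤ k) (hkr : k + r ≤ n)
    (β γ : Finset ℤ) (hS : IsSymbol n k r β γ) (hstd : IsStandard β γ) :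
    (∀ T ∈ (pairsS β γ).powerset,
        IsSymbol n k r (swapSymbol β γ T).1 (swapSymbol β γ T).2) ∧
    Set.InjOn (swapSymbol β γ) ((pairsS β γ).powerset : Set (Finset (ℤ × ℤ))) ∧
    (CSet β γ).card = 2 ^ (pairsS β γ).card := by
  classical
  obtain ⟨hβI, hγI, hβc, hγc⟩ := hS
  have key : ∀ T : Finset (ℤ × ℤ), T ⊆ pairsS β γ →
      T.image Prod.fst ⊆ γ ∧ T.image Prod.snd ⊆ β ∧
      (∀ x ∈ T.image Prod.fst, x ∉ β) ∧ (∀ x ∈ T.image Prod.snd, x ∉ γ) ∧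
      (T.image Prod.fst).card = T.card ∧ (T.image Prod.snd).card = T.card := by
    intro T hT
    refine ⟨?_, ?_, ?_, ?_, ?_, ?_⟩
    · intro x hx
      obtain ⟨p, hp, rfl⟩ := Finset.mem_image.mp hx
      exact pair_fst_mem_gamma β γ (hT hp)
    · intro x hx
      obtain ⟨p, hp, rfl⟩ := Finset.mem_image.mp hx
      exact pair_snd_mem_beta β γ (hT hp)
    · intro x hx
      obtain ⟨p, hp, rfl⟩ := Finset.mem_image.mp hx
      exact pair_fst_not_mem_beta β γ (hT hp)
    · intro x hx
      obtain ⟨p, hp, rfl⟩ := Finset.mem_image.mp hx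
      exact pair_snd_not_mem_gamma β γ (hT hp)
    · exact Finset.card_image_of_injOn fun p hp q hq h =>
        pair_fst_inj β γ (hT hp) (hT hq) h
    · exact Finset.card_image_of_injOn fun p hp q hq h =>
        pair_snd_inj β γ (hT hp) (hT hq) h
  have symb : ∀ T ∈ (pairsS β γ).powerset,
      IsSymbol n k r (swapSymbol β γ T).1 (swapSymbol β γ T).2 := by
    intro T hT'
    have hT := Finset.mem_powerset.mp hT'
    obtain ⟨hA, hB, hAβ, hBγ, hAc, hBc⟩ := key T hT
    have hBle : T.card ≤ β.card := hBc ▸ Finset.card_le_card hB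
    have hAle : T.card ≤ γ.card := hAc ▸ Finset.card_le_card hA
    refine ⟨?_, ?_, ?_, ?_⟩
    · exact Finset.union_subset (Finset.sdiff_subset.trans hβI) (hA.trans hγI)
    · exact Finset.union_subset (Finset.sdiff_subset.trans hγI) (hB.trans hβI)
    · have hdisj : Disjoint (β \ T.image Prod.snd) (T.image Prod.fst) := by
        rw [Finset.disjoint_right]
        intro x hx hx'
        exact hAβ x hx (Finset.mem_sdiff.mp hx').1
      show ((β \ T.image Prod.snd) ∪ T.image Prod.fst).card = k + r
      rw [Finset.card_union_of_disjoint hdisj, Finset.card_sdiff_of_subset hB, hAc, hBc]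
      omega
    · have hdisj : Disjoint (γ \ T.image Prod.fst) (T.image Prod.snd) := by
        rw [Finset.disjoint_right]
        intro x hx hx'
        exact hBγ x hx (Finset.mem_sdiff.mp hx').1
      show ((γ \ T.image Prod.fst) ∪ T.image Prod.snd).card = k
      rw [Finset.card_union_of_disjoint hdisj, Finset.card_sdiff_of_subset hA, hAc, hBc]
      omega
  have recA : ∀ (U : Finset (ℤ × ℤ)), U ⊆ pairsS β γ →
      ((β \ U.image Prod.snd) ∪ U.image Prod.fst) \ β = U.image Prod.fst := by
    intro U hU
    obtain ⟨-, -, hAβ, -, -, -⟩ := key U hU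
    ext x
    simp only [Finset.mem_sdiff, Finset.mem_union]
    constructor
    · rintro ⟨h1 | h1, h2⟩
      · exact absurd h1.1 h2
      · exact h1
    · intro hx
      exact ⟨Or.inr hx, hAβ x hx⟩
  have hinj : Set.InjOn (swapSymbol β γ)
      ((pairsS β γ).powerset : Set (Finset (ℤ × ℤ))) := by
    intro T hTm T' hT'm heq
    have hT : T ⊆ pairsS β γ := Finset.mem_powerset.mp hTm
    have hT' : T' ⊆ pairsS β γ := Finset.mem_powerset.mp hT'm
    have h1 : (β \ T.image Prod.snd) ∪ T.image Prod.fst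
        = (β \ T'.image Prod.snd) ∪ T'.image Prod.fst := congrArg Prod.fst heq
    have hAeq : T.image Prod.fst = T'.image Prod.fst := by
      rw [← recA T hT, ← recA T' hT', h1]
    have sub : ∀ U U' : Finset (ℤ × ℤ), U ⊆ pairsS β γ → U' ⊆ pairsS β γ →
        U.image Prod.fst = U'.image Prod.fst → U ⊆ U' := by
      intro U U' hU hU' him p hp
      have hx : p.1 ∈ U'.image Prod.fst := him ▸ Finset.mem_image_of_mem _ hp
      obtain ⟨q, hq, hq1⟩ := Finset.mem_image.mp hx
      have := pair_fst_inj β γ (hU' hq) (hU hp) hq1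
      rwa [← this]
    exact Finset.Subset.antisymm (sub T T' hT hT' hAeq) (sub T' T hT' hT hAeq.symm)
  refine ⟨symb, hinj, ?_⟩
  rw [CSet, Finset.card_image_of_injOn hinj, Finset.card_powerset]


end LM2003
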